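/- Let P, Q be homogeneous polynomials of degree ν in x, y over ℂ with xP + yQ not identically zero, and set ω = P dx + Q dy. For N ≥ 1, the linear map F from the space of homogeneous polynomials H of degree N+1 to homogeneous 2-form coefficients, given by F(H) = (xP + yQ)(H_x Q - H_y P), has kernel of dimension at most 1; consequently F has rank at least N+1 on the (N+2)-dimensional space of homogeneous polynomials of degree N+1. -/

import Mathlib

/-!
A kernel element `H` satisfies `H_x Q = H_y P`; together with Euler's identity
`x H_x + y H_y = (N + 1) H` this gives `(xP + yQ) H_x = (N + 1) P H`. Hence for two kernel
elements `H₁, H₂` the Wronskian `H₁ ∂ₓH₂ - ∂ₓH₁ H₂` vanishes once the factor `xP + yQ ≠ 0`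
is cancelled. Dehomogenizing at `y = 1` turns this into a one-variable Wronskian, which
vanishes only for proportional polynomials: after dividing out their gcd, two coprime
polynomials with zero Wronskian are constants. So the kernel is at most a line, and
rank–nullity on the `(N + 2)`-dimensional space gives the rank bound.
-/

open MvPolynomial

/-- The linear map `H ↦ (xP + yQ)·(H_x Q - H_y P)` on `ℂ[x,y]`. -/
noncomputable def Fmap (P Q : MvPolynomial (Fin 2) ℂ) :
    MvPolynomial (Fin 2) ℂ →ₗ[ℂ] MvPolynomial (Fin 2) ℂ where
  toFun H := (X 0 * P + X 1 * Q) * (pderiv 0 H * Q - pderiv 1 H * P)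
  map_add' H₁ H₂ := by simp only [map_add]; ring
  map_smul' c H := by simp only [map_smul, smul_eq_C_mul, RingHom.id_apply, pderiv_C_mul]; ring

theorem Module.finrank_le_one_of_forall_ne_zero_exists_smul_eq {R M : Type*} [Semiring R]
    [StrongRankCondition R] [AddCommMonoid M] [Module R M]
    (h : ∀ v w : M, v ≠ 0 → ∃ c : R, c • v = w) : Module.finrank R M ≤ 1 := by
  by_cases hM : ∃ v : M, v ≠ 0
  · obtain ⟨v, hv⟩ := hM
    exact finrank_le_one v fun w => h v w hv
  · push Not at hM
    exact finrank_le_one 0 fun w => ⟨0, by rw [hM w, smul_zero]⟩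

namespace Polynomial

theorem wronskian_mul_mul {R : Type*} [CommRing R] (d a b : R[X]) :
    wronskian (d * a) (d * b) = d ^ 2 * wronskian a b := by
  simp only [wronskian, derivative_mul]
  ring

theorem exists_eq_C_mul_of_wronskian_eq_zero {K : Type*} [Field K] [CharZero K] {f g : K[X]}
    (hf : f ≠ 0) (hw : wronskian f g = 0) : ∃ c, g = C c * f := by
  classical
  set d := GCDMonoid.gcd g f
  have hd : d ≠ 0 := fun h => hf ((gcd_eq_zero_iff g f).mp h).2
  set a := f / d
  set b := g / d
  have ha : f = d * a := (EuclideanDomain.mul_div_cancel' hd (gcd_dvd_right g f)).symm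
  have hb : g = d * b := (EuclideanDomain.mul_div_cancel' hd (gcd_dvd_left g f)).symm
  have hab : IsCoprime a b := (isCoprime_div_gcd_div_gcd hf).symm
  rw [ha, hb, wronskian_mul_mul, mul_eq_zero, or_iff_right (pow_ne_zero 2 hd),
    hab.wronskian_eq_zero_iff] at hw
  rw [eq_C_of_derivative_eq_zero hw.1] at ha
  rw [eq_C_of_derivative_eq_zero hw.2] at hb
  have ha0 : a.coeff 0 ≠ 0 := fun h => hf (by rw [ha, h, map_zero, mul_zero])
  refine ⟨b.coeff 0 / a.coeff 0, ?_⟩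
  rw [hb, ha, ← mul_assoc, mul_comm (C _), mul_assoc, ← C_mul, div_mul_cancel₀ _ ha0]

end Polynomial

namespace MvPolynomial

theorem finrank_homogeneousSubmodule {σ K : Type*} [Fintype σ] [Field K] (n : ℕ) :
    Module.finrank K (homogeneousSubmodule σ K n) = (Fintype.card σ + n - 1).choose n := by
  classical
  have hdegree : {d : σ →₀ ℕ | d.degree = n} = ↑((Finset.univ : Finset σ).finsuppAntidiag n) := by
    ext d
    simp [Finsupp.degree_eq_sum]
  rw [homogeneousSubmodule_eq_finsupp_supported, hdegree, ← restrictSupport,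
    Module.finrank_eq_card_basis (basisRestrictSupport K _)]
  simp [Finset.card_finsuppAntidiag_nat_eq_choose]

theorem aeval_X_one_pderiv_zero {R : Type*} [CommRing R] (H : MvPolynomial (Fin 2) R) :
    aeval ![Polynomial.X, (1 : Polynomial R)] (pderiv 0 H) =
      Polynomial.derivative (aeval ![Polynomial.X, (1 : Polynomial R)] H) := by
  induction H using MvPolynomial.induction_on with
  | C a => simp
  | add p q hp hq => simp only [map_add, hp, hq]
  | mul_X p i hp =>
    rw [Derivation.leibniz, map_mul, Polynomial.derivative_mul, ← hp, map_add, pderiv_X]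
    fin_cases i <;> simp [add_comm, mul_comm]

theorem IsHomogeneous.exists_eq_C_mul_of_mul_pderiv_zero_eq {K : Type*} [Field K] [CharZero K]
    {n : ℕ} {H₁ H₂ : MvPolynomial (Fin 2) K} (h₁ : H₁.IsHomogeneous n) (h₂ : H₂.IsHomogeneous n)
    (hne : H₁ ≠ 0) (hw : H₁ * pderiv 0 H₂ = pderiv 0 H₁ * H₂) : ∃ c, H₂ = C c * H₁ := by
  have hdh : MvPolynomial.aeval ![Polynomial.X, 1] H₁ ≠ 0 := fun h => hne <| by
    rw [← Polynomial.homogenize_eq_of_isHomogeneous h₁ h, Polynomial.homogenize_zero]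
  obtain ⟨c, hc⟩ := Polynomial.exists_eq_C_mul_of_wronskian_eq_zero hdh
    (g := MvPolynomial.aeval ![Polynomial.X, 1] H₂) <| by
    rw [Polynomial.wronskian, ← aeval_X_one_pderiv_zero, ← aeval_X_one_pderiv_zero, ← map_mul,
      ← map_mul, hw, sub_self]
  refine ⟨c, ?_⟩
  rw [← Polynomial.homogenize_eq_of_isHomogeneous h₂ hc, Polynomial.homogenize_C_mul,
    Polynomial.homogenize_eq_of_isHomogeneous h₁ rfl]

theorem IsHomogeneous.add_mul_pderiv_zero_eq {R : Type*} [CommRing R] {n : ℕ}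
    {P Q H : MvPolynomial (Fin 2) R} (hH : H.IsHomogeneous n)
    (hker : pderiv 0 H * Q = pderiv 1 H * P) :
    (X 0 * P + X 1 * Q) * pderiv 0 H = n • (P * H) := by
  have euler := hH.sum_X_mul_pderiv
  rw [Fin.sum_univ_two] at euler
  rw [← mul_smul_comm, ← euler]
  linear_combination (X 1 : MvPolynomial (Fin 2) R) * hker

end MvPolynomial

section Fmap

variable {P Q : MvPolynomial (Fin 2) ℂ}

theorem Fmap_eq_zero_iff (hrad : X 0 * P + X 1 * Q ≠ 0) {H : MvPolynomial (Fin 2) ℂ} :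
    Fmap P Q H = 0 ↔ pderiv 0 H * Q = pderiv 1 H * P := by
  rw [Fmap, LinearMap.coe_mk, AddHom.coe_mk, mul_eq_zero, or_iff_right hrad, sub_eq_zero]

theorem exists_eq_C_mul_of_Fmap_eq_zero (hrad : X 0 * P + X 1 * Q ≠ 0) {n : ℕ}
    {H₁ H₂ : MvPolynomial (Fin 2) ℂ} (h₁ : H₁.IsHomogeneous n) (h₂ : H₂.IsHomogeneous n)
    (hne : H₁ ≠ 0) (e₁ : Fmap P Q H₁ = 0) (e₂ : Fmap P Q H₂ = 0) : ∃ c, H₂ = C c * H₁ := by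
  rw [Fmap_eq_zero_iff hrad] at e₁ e₂
  refine h₁.exists_eq_C_mul_of_mul_pderiv_zero_eq h₂ hne ?_
  have hE : (X 0 * P + X 1 * Q) * (H₁ * pderiv 0 H₂ - pderiv 0 H₁ * H₂) = 0 := by
    linear_combination H₁ * h₂.add_mul_pderiv_zero_eq e₂ - H₂ * h₁.add_mul_pderiv_zero_eq e₁
  exact sub_eq_zero.mp ((mul_eq_zero.mp hE).resolve_left hrad)

theorem finrank_ker_Fmap_comp_subtype_le_one (hrad : X 0 * P + X 1 * Q ≠ 0) (n : ℕ) :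
    Module.finrank ℂ
      (LinearMap.ker ((Fmap P Q).comp (homogeneousSubmodule (Fin 2) ℂ n).subtype)) ≤ 1 := by
  apply Module.finrank_le_one_of_forall_ne_zero_exists_smul_eq
  intro v w hv
  obtain ⟨c, hc⟩ := exists_eq_C_mul_of_Fmap_eq_zero hrad v.1.2 w.1.2 (by simpa using hv) v.2 w.2
  exact ⟨c, by ext1; ext1; simp [hc, smul_eq_C_mul]⟩

end Fmap

theorem stmt1_general (N : ℕ) (P Q : MvPolynomial (Fin 2) ℂ)
    (hrad : X 0 * P + X 1 * Q ≠ 0) :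
    Module.finrank ℂ
        (LinearMap.ker ((Fmap P Q).comp
          (Submodule.subtype (homogeneousSubmodule (Fin 2) ℂ (N + 1))))) ≤ 1 ∧
    N + 1 ≤ Module.finrank ℂ
        (LinearMap.range ((Fmap P Q).comp
          (Submodule.subtype (homogeneousSubmodule (Fin 2) ℂ (N + 1))))) := by
  have hker := finrank_ker_Fmap_comp_subtype_le_one hrad (N + 1)
  have hdim : Module.finrank ℂ (homogeneousSubmodule (Fin 2) ℂ (N + 1)) = N + 2 := by
    rw [finrank_homogeneousSubmodule, Fintype.card_fin,
      show 2 + (N + 1) - 1 = N + 1 + 1 by omega, Nat.choose_succ_self_right]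
  have : FiniteDimensional ℂ (homogeneousSubmodule (Fin 2) ℂ (N + 1)) :=
    Module.finite_of_finrank_pos (by omega)
  have hrank := LinearMap.finrank_range_add_finrank_ker
    ((Fmap P Q).comp (homogeneousSubmodule (Fin 2) ℂ (N + 1)).subtype)
  exact ⟨hker, by omega⟩

/-- Let `P, Q` be homogeneous of degree `ν` with `xP + yQ ≢ 0`.  For `N ≥ 1`, the
linear map `F : H ↦ (xP + yQ)(H_x Q - H_y P)`, restricted to the `(N+2)`-dimensional
space of homogeneous polynomials of degree `N+1`, has kernel of dimension at most `1`,
hence rank at least `N+1`. -/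
theorem stmt1 (ν N : ℕ) (hN : 1 ≤ N) (P Q : MvPolynomial (Fin 2) ℂ)
    (hP : P.IsHomogeneous ν) (hQ : Q.IsHomogeneous ν)
    (hrad : X 0 * P + X 1 * Q ≠ 0) :
    Module.finrank ℂ
        (LinearMap.ker ((Fmap P Q).comp
          (Submodule.subtype (homogeneousSubmodule (Fin 2) ℂ (N + 1))))) ≤ 1 ∧
    N + 1 ≤ Module.finrank ℂ
        (LinearMap.range ((Fmap P Q).comp
          (Submodule.subtype (homogeneousSubmodule (Fin 2) ℂ (N + 1))))) :=
  stmt1_general N P Q hrad
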